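/- In R = ℂ[X;σ] where σ is complex conjugation, the central polynomial f = X² + 1 is irreducible in R, is its own bound, and satisfies deg f* = deg f = 2 < 2·deg f; hence the irreducibility criterion 'f irreducible implies deg f* = μ·deg f' fails over infinite base fields. -/

import Mathlib

/-- An Ore extension `R = D[X;σ,δ]`: `R` is a ring containing `D` via `C`, with a
distinguished element `X`, which is a free left `D`-module on the powers of `X`
(encoded by the coefficient equivalence `e`), subject to `X·a = σ(a)·X + δ(a)`,
where `δ` is a `σ`-derivation. -/
structure OreExt (D : Type*) [DivisionRing D] (σ : D ≃+* D) (δ : D → D)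
    (R : Type*) [Ring R] where
  C : D →+* R
  X : R
  e : R ≃+ (ℕ →₀ D)
  e_symm_single : ∀ (n : ℕ) (d : D), e.symm (Finsupp.single n d) = C d * X ^ n
  X_mul_C : ∀ a : D, X * C a = C (σ a) * X + C (δ a)
  δ_add : ∀ a b : D, δ (a + b) = δ a + δ b
  δ_mul : ∀ a b : D, δ (a * b) = σ a * δ b + δ a * b

namespace OreExt

variable {D R : Type*} [DivisionRing D] [Ring R] {σ : D ≃+* D} {δ : D → D}

/-- Degree, with `deg 0 = ⊥` (i.e. `-∞`). -/
noncomputable def deg (O : OreExt D σ δ R) (f : R) : WithBot ℕ := (O.e f).support.max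

/-- Degree as a natural number (`0` for the zero polynomial). -/
noncomputable def ndeg (O : OreExt D σ δ R) (f : R) : ℕ := WithBot.unbotD 0 ((O.e f).support.max)

/-- Leading coefficient. -/
noncomputable def lc (O : OreExt D σ δ R) (f : R) : D := O.e f (O.ndeg f)

/-- `f` is irreducible: it has positive degree and in any factorization one of the two
factors is a constant (an element of `D`). -/
def IrreducibleOre (O : OreExt D σ δ R) (f : R) : Prop :=
  0 < O.ndeg f ∧ ∀ g h : R, f = g * h → (∃ d : D, g = O.C d) ∨ (∃ d : D, h = O.C d)

end OreExt

/-- A left ideal is twosided. -/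
def IsTwoSidedIdeal' {R : Type*} [Ring R] (I : Ideal R) : Prop :=
  ∀ x ∈ I, ∀ r : R, x * r ∈ I

/-- `b` is a bound of `f`: the left ideal `Rb` is twosided and is the largest twosided
ideal contained in `Rf`. -/
def IsBound {R : Type*} [Ring R] (f b : R) : Prop :=
  Ideal.span {b} ≤ Ideal.span {f} ∧ IsTwoSidedIdeal' (Ideal.span {b}) ∧
    ∀ J : Ideal R, IsTwoSidedIdeal' J → J ≤ Ideal.span {f} → J ≤ Ideal.span {b}

/-!
Complex conjugation is an involution, so `X²` commutes with every `C a` and hence `X² + 1` is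
central; the left ideal it generates is then two-sided, which makes `X² + 1` its own bound.
Degrees add in a skew polynomial ring over a division ring, so a nontrivial factorization of
`X² + 1` has the form `(aX + b)(cX + d)`. Comparing coefficients gives `a c̄ = 1`,
`a d̄ + b c = 0` and `b d = 1`, which force `|a|² + |b|² = 0`, impossible since `a ≠ 0`.
-/

theorem isBound_self_of_commute {R : Type*} [Ring R] {f : R} (hf : ∀ r, Commute f r) :
    IsBound f f := by
  refine ⟨le_rfl, fun x hx r => ?_, fun _ _ hJ => hJ⟩
  obtain ⟨s, rfl⟩ := Ideal.mem_span_singleton'.mp hx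
  exact Ideal.mem_span_singleton'.mpr ⟨s * r, by rw [mul_assoc, mul_assoc, (hf r).eq]⟩

namespace OreExt

open Finset

variable {D R : Type*} [DivisionRing D] [Ring R] {σ : D ≃+* D} {δ : D → D}

section Coefficients

variable (O : OreExt D σ δ R)

theorem e_C_mul_X_pow (n : ℕ) (d : D) : O.e (O.C d * O.X ^ n) = Finsupp.single n d := by
  rw [← O.e_symm_single, AddEquiv.apply_symm_apply]

theorem sum_C_mul_X_pow (g : R) : ((O.e g).sum fun n d => O.C d * O.X ^ n) = g := by
  conv_rhs => rw [← O.e.symm_apply_apply g, ← Finsupp.sum_single (O.e g), map_finsuppSum]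
  exact Finsupp.sum_congr fun n _ => (O.e_symm_single n _).symm

variable {O}

theorem le_ndeg {g : R} {i : ℕ} (h : O.e g i ≠ 0) : i ≤ O.ndeg g := by
  have hi : (i : WithBot ℕ) ≤ (O.e g).support.max :=
    le_max (Finsupp.mem_support_iff.mpr h)
  obtain ⟨k, hk⟩ := WithBot.ne_bot_iff_exists.mp (ne_bot_of_le_ne_bot WithBot.coe_ne_bot hi)
  rw [← hk] at hi
  rw [ndeg, ← hk, WithBot.unbotD_coe]
  exact WithBot.coe_le_coe.mp hi

theorem e_ndeg_ne_zero {g : R} (hg : g ≠ 0) : O.e g (O.ndeg g) ≠ 0 := by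
  have hne : (O.e g).support.Nonempty :=
    Finsupp.support_nonempty_iff.mpr ((map_ne_zero_iff O.e O.e.injective).mpr hg)
  obtain ⟨k, hk⟩ := max_of_nonempty hne
  rw [ndeg, hk]
  exact Finsupp.mem_support_iff.mp (mem_of_max hk)

theorem ndeg_eq_of_e_ne_zero {g : R} {n : ℕ} (hn : O.e g n ≠ 0) (h : ∀ i, n < i → O.e g i = 0) :
    O.ndeg g = n := by
  have hg : g ≠ 0 := by rintro rfl; simp at hn
  exact le_antisymm (not_lt.mp fun hlt => e_ndeg_ne_zero hg (h _ hlt)) (le_ndeg hn)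

variable (O) in
theorem eq_sum_range (g : R) :
    g = ∑ i ∈ range (O.ndeg g + 1), O.C (O.e g i) * O.X ^ i := by
  conv_lhs => rw [← O.sum_C_mul_X_pow g]
  refine Finsupp.sum_of_support_subset _ (fun i hi => ?_) _ (fun _ _ => by simp)
  exact mem_range.mpr (Nat.lt_succ_of_le (le_ndeg (Finsupp.mem_support_iff.mp hi)))

theorem eq_C_of_ndeg_eq_zero {g : R} (h : O.ndeg g = 0) : g = O.C (O.e g 0) := by
  conv_lhs => rw [O.eq_sum_range g, h]
  simp

theorem eq_C_mul_X_add_C_of_ndeg_eq_one {g : R} (h : O.ndeg g = 1) :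
    g = O.C (O.e g 1) * O.X + O.C (O.e g 0) := by
  conv_lhs => rw [O.eq_sum_range g, h, sum_range_succ, sum_range_one]
  simp [add_comm]

variable (O)

theorem e_C_mul_X_sq_add (p q r : D) :
    O.e (O.C p * O.X ^ 2 + O.C q * O.X + O.C r) =
      Finsupp.single 2 p + Finsupp.single 1 q + Finsupp.single 0 r := by
  rw [map_add, map_add, ← O.e_C_mul_X_pow, ← O.e_C_mul_X_pow, ← O.e_C_mul_X_pow, pow_one,
    pow_zero, mul_one]

theorem eq_of_C_mul_X_sq_add_eq {p q r p' q' r' : D}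
    (h : O.C p * O.X ^ 2 + O.C q * O.X + O.C r = O.C p' * O.X ^ 2 + O.C q' * O.X + O.C r') :
    p = p' ∧ q = q' ∧ r = r' := by
  have he := congrArg O.e h
  rw [e_C_mul_X_sq_add, e_C_mul_X_sq_add] at he
  refine ⟨?_, ?_, ?_⟩
  · simpa using DFunLike.congr_fun he 2
  · simpa using DFunLike.congr_fun he 1
  · simpa using DFunLike.congr_fun he 0

theorem e_X_sq_add_one : O.e (O.X ^ 2 + 1) = Finsupp.single 2 1 + Finsupp.single 0 1 := by
  rw [← O.e_C_mul_X_pow, ← O.e_C_mul_X_pow, ← map_add]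
  simp

theorem ndeg_X_sq_add_one : O.ndeg (O.X ^ 2 + 1) = 2 := by
  refine ndeg_eq_of_e_ne_zero ?_ fun i hi => ?_
  · simp [e_X_sq_add_one]
  · simp [e_X_sq_add_one, hi.ne, (two_pos.trans hi).ne]

end Coefficients

section SkewPolynomial

variable (O : OreExt D σ (fun _ => 0) R)

theorem X_mul_C' (a : D) : O.X * O.C a = O.C (σ a) * O.X := by
  simpa using O.X_mul_C a

theorem X_pow_mul_C (n : ℕ) (a : D) : O.X ^ n * O.C a = O.C ((⇑σ)^[n] a) * O.X ^ n := by
  induction n with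
  | zero => simp
  | succ n ih =>
    rw [pow_succ', mul_assoc, ih, ← mul_assoc, X_mul_C', Function.iterate_succ_apply',
      mul_assoc, ← pow_succ']

theorem C_mul_X_pow_mul_C_mul_X_pow (a b : D) (m n : ℕ) :
    O.C a * O.X ^ m * (O.C b * O.X ^ n) = O.C (a * (⇑σ)^[m] b) * O.X ^ (m + n) := by
  rw [mul_assoc, ← mul_assoc (O.X ^ m), X_pow_mul_C, mul_assoc, ← pow_add, ← mul_assoc, ← map_mul]

theorem commute_X_pow {n : ℕ} (hσ : ∀ a, (⇑σ)^[n] a = a) (g : R) : Commute (O.X ^ n) g := by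
  rw [← O.sum_C_mul_X_pow g]
  refine Commute.sum_right _ _ _ fun i _ => ?_
  rw [Commute, SemiconjBy, ← mul_assoc, X_pow_mul_C, hσ, mul_assoc, mul_assoc, ← pow_add,
    ← pow_add, add_comm]

theorem C_mul_X_add_C_mul_C_mul_X_add_C (a b c d : D) :
    (O.C a * O.X + O.C b) * (O.C c * O.X + O.C d) =
      O.C (a * σ c) * O.X ^ 2 + O.C (a * σ d + b * c) * O.X + O.C (b * d) := by
  have hXC : ∀ x g, O.X * (O.C x * g) = O.C (σ x) * (O.X * g) := fun x g => by
    rw [← mul_assoc, X_mul_C', mul_assoc]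
  have hCC : ∀ x y g, O.C x * (O.C y * g) = O.C (x * y) * g := fun x y g => by
    rw [← mul_assoc, map_mul]
  simp only [add_mul, mul_add, mul_assoc, X_mul_C', hXC, hCC, ← map_mul, pow_two, map_add]
  abel

theorem e_mul_apply (g h : R) (k : ℕ) :
    O.e (g * h) k = ∑ i ∈ (O.e g).support, ∑ j ∈ (O.e h).support,
      if i + j = k then O.e g i * (⇑σ)^[i] (O.e h j) else 0 := by
  conv_lhs => rw [← O.sum_C_mul_X_pow g, ← O.sum_C_mul_X_pow h]
  simp only [Finsupp.sum, sum_mul, mul_sum, C_mul_X_pow_mul_C_mul_X_pow,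
    map_sum, e_C_mul_X_pow, Finsupp.finsetSum_apply, Finsupp.single_apply]
  exact sum_comm

variable {O}

theorem e_mul_ndeg_add_ndeg {g h : R} (hg : g ≠ 0) (hh : h ≠ 0) :
    O.e (g * h) (O.ndeg g + O.ndeg h) =
      O.e g (O.ndeg g) * (⇑σ)^[O.ndeg g] (O.e h (O.ndeg h)) := by
  rw [e_mul_apply, sum_eq_single_of_mem _ (Finsupp.mem_support_iff.mpr (e_ndeg_ne_zero hg)),
    sum_eq_single_of_mem _ (Finsupp.mem_support_iff.mpr (e_ndeg_ne_zero hh)), if_pos rfl]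
  · intro j hj hjn
    rw [if_neg (by have := le_ndeg (Finsupp.mem_support_iff.mp hj); omega)]
  · intro i hi hin
    refine sum_eq_zero fun j hj => if_neg ?_
    have := le_ndeg (Finsupp.mem_support_iff.mp hi)
    have := le_ndeg (Finsupp.mem_support_iff.mp hj)
    omega

theorem e_mul_eq_zero_of_ndeg_add_ndeg_lt {g h : R} {k : ℕ} (hk : O.ndeg g + O.ndeg h < k) :
    O.e (g * h) k = 0 := by
  refine (e_mul_apply O g h k).trans (sum_eq_zero fun i hi => sum_eq_zero fun j hj => if_neg ?_)
  have := le_ndeg (Finsupp.mem_support_iff.mp hi)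
  have := le_ndeg (Finsupp.mem_support_iff.mp hj)
  omega

theorem ndeg_mul {g h : R} (hg : g ≠ 0) (hh : h ≠ 0) : O.ndeg (g * h) = O.ndeg g + O.ndeg h := by
  refine ndeg_eq_of_e_ne_zero ?_ fun k hk => e_mul_eq_zero_of_ndeg_add_ndeg_lt hk
  rw [e_mul_ndeg_add_ndeg hg hh]
  exact mul_ne_zero (e_ndeg_ne_zero hg)
    (((σ.injective.iterate _).ne_iff' (Function.iterate_fixed (map_zero σ) _)).mpr
      (e_ndeg_ne_zero hh))

end SkewPolynomial

section ComplexConjugation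

open Complex ComplexConjugate

variable (O : OreExt ℂ conjAe.toRingEquiv (fun _ => 0) R)

theorem C_mul_X_add_C_mul_C_mul_X_add_C_ne_X_sq_add_one (a b c d : ℂ) :
    (O.C a * O.X + O.C b) * (O.C c * O.X + O.C d) ≠ O.X ^ 2 + 1 := by
  intro h
  have hf : O.X ^ 2 + 1 = O.C 1 * O.X ^ 2 + O.C 0 * O.X + O.C 1 := by simp
  rw [C_mul_X_add_C_mul_C_mul_X_add_C, hf] at h
  obtain ⟨h2, h1, h0⟩ := O.eq_of_C_mul_X_sq_add_eq h
  simp only [AlgEquiv.coe_ringEquiv, conjAe_coe] at h2 h1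
  have h2' : conj a * c = 1 := by simpa using congrArg conj h2
  have h0' : conj b * conj d = 1 := by simpa using congrArg conj h0
  -- multiplying the middle coefficient by `conj (a * b)` gives `|a|² + |b|² = 0`
  have hnorm : a * conj a + b * conj b = 0 := by
    linear_combination (conj b * conj a) * h1 - (a * conj a) * h0' - (b * conj b) * h2'
  have hsq : (normSq a : ℂ) + normSq b = 0 := by rw [← mul_conj, ← mul_conj]; exact hnorm
  norm_cast at hsq
  have ha : a = 0 := normSq_eq_zero.mp (by linarith [normSq_nonneg a, normSq_nonneg b])
  simp [ha] at h2

theorem irreducibleOre_X_sq_add_one : O.IrreducibleOre (O.X ^ 2 + 1) := by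
  refine ⟨by rw [ndeg_X_sq_add_one]; norm_num, fun g h hgh => ?_⟩
  by_contra! ⟨hg, hh⟩
  have hg_ne : g ≠ 0 := fun h0 => hg 0 (by rw [h0, map_zero])
  have hh_ne : h ≠ 0 := fun h0 => hh 0 (by rw [h0, map_zero])
  have hg_pos : O.ndeg g ≠ 0 := fun h0 => hg _ (eq_C_of_ndeg_eq_zero h0)
  have hh_pos : O.ndeg h ≠ 0 := fun h0 => hh _ (eq_C_of_ndeg_eq_zero h0)
  have hdeg := O.ndeg_X_sq_add_one
  rw [hgh, ndeg_mul hg_ne hh_ne] at hdeg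
  rw [eq_C_mul_X_add_C_of_ndeg_eq_one (by omega : O.ndeg g = 1),
    eq_C_mul_X_add_C_of_ndeg_eq_one (by omega : O.ndeg h = 1)] at hgh
  exact C_mul_X_add_C_mul_C_mul_X_add_C_ne_X_sq_add_one O _ _ _ _ hgh.symm

theorem commute_X_sq_add_one (g : R) : Commute (O.X ^ 2 + 1) g :=
  (O.commute_X_pow (fun a => by simp) g).add_left (Commute.one_left g)

end ComplexConjugation

end OreExt

/-- in `R = ℂ[X;σ]` with `σ` complex conjugation, `f = X² + 1` is
irreducible, is its own bound, and `deg f* = deg f = 2 < 2·deg f`, so the criterion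
`f` irreducible → `deg f* = μ·deg f` fails over infinite fields. -/
theorem complex_counterexample {R : Type*} [Ring R]
    (O : OreExt ℂ Complex.conjAe.toRingEquiv (fun _ => 0) R) :
    O.IrreducibleOre (O.X ^ 2 + 1) ∧
      IsBound (O.X ^ 2 + 1) (O.X ^ 2 + 1) ∧
      O.ndeg (O.X ^ 2 + 1) = 2 ∧
      O.ndeg (O.X ^ 2 + 1) < 2 * O.ndeg (O.X ^ 2 + 1) := by
  refine ⟨O.irreducibleOre_X_sq_add_one, isBound_self_of_commute O.commute_X_sq_add_one,
    O.ndeg_X_sq_add_one, by rw [O.ndeg_X_sq_add_one]; norm_num⟩
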